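/- arXiv:2407.06522 — 2 statements merged into one kernel-verified Lean document; each statement's English description precedes it below -/
import Mathlib

section
/- For the symmetric coupled Gaussian (Student's t-type) density f(x) = (1/Z)(1 + κ(x/σ)²)^{-(1+κ)/(2κ)} with σ > 0, κ > 0 and Z = σ B(1/(2κ), 1/2)/√κ, the second moment of the normalized 3rd-power density equals σ²/3: (∫_{-∞}^∞ x² f(x)^3 dx)/(∫_{-∞}^∞ f(x)^3 dx) = σ²/3. -/
/-!
With `b = κ / σ²` and `p = 3(1 + κ) / (2κ)`, `f³` is a constant multiple of `(1 + b x²)^(-p)`.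
The function `x (1 + b x²)^(1 - p)` has derivative `(1 + b x²)^(-p) - (2p - 3) b x² (1 + b x²)^(-p)`
and, since `p > 3/2`, vanishes at `±∞`, so `∫ (1 + b x²)^(-p) = (2p - 3) b ∫ x² (1 + b x²)^(-p)`.
Hence the ratio is `1 / ((2p - 3) b) = σ² / 3`.
-/

open MeasureTheory Set Real

noncomputable def betaFn (a b : ℝ) : ℝ := Real.Gamma a * Real.Gamma b / Real.Gamma (a + b)

open Filter Topology

lemma betaFn_pos {a b : ℝ} (ha : 0 < a) (hb : 0 < b) : 0 < betaFn a b := by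
  unfold betaFn
  have := Gamma_pos_of_pos ha
  have := Gamma_pos_of_pos hb
  have := Gamma_pos_of_pos (add_pos ha hb)
  positivity

section OneAddMulSq

variable {b p : ℝ}

lemma integrable_one_add_mul_sq_rpow_neg (hb : 0 < b) (hp : 1 / 2 < p) :
    Integrable fun x : ℝ => (1 + b * x ^ 2) ^ (-p) := by
  have h : Integrable fun y : ℝ => (1 + ‖y‖ ^ 2) ^ (-(2 * p) / 2) :=
    integrable_rpow_neg_one_add_norm_sq (by simp; linarith)
  convert h.comp_mul_left' (sqrt_pos.mpr hb).ne' using 2 with x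
  rw [norm_mul, mul_pow, norm_of_nonneg (sqrt_nonneg b), sq_sqrt hb.le, norm_eq_abs, sq_abs]
  ring_nf

lemma one_add_mul_sq_rpow_one_sub (hb : 0 ≤ b) (x : ℝ) :
    (1 + b * x ^ 2) ^ (1 - p) = (1 + b * x ^ 2) ^ (-p) + b * (x ^ 2 * (1 + b * x ^ 2) ^ (-p)) := by
  rw [sub_eq_add_neg, rpow_add (by positivity), rpow_one]
  ring

lemma integrable_sq_mul_one_add_mul_sq_rpow_neg (hb : 0 < b) (hp : 3 / 2 < p) :
    Integrable fun x : ℝ => x ^ 2 * (1 + b * x ^ 2) ^ (-p) := by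
  have h := ((integrable_one_add_mul_sq_rpow_neg (p := p - 1) hb (by linarith)).sub
    (integrable_one_add_mul_sq_rpow_neg (p := p) hb (by linarith))).const_mul b⁻¹
  convert h using 2 with x
  rw [neg_sub, Pi.sub_apply, one_add_mul_sq_rpow_one_sub hb.le, add_sub_cancel_left,
    inv_mul_cancel_left₀ hb.ne']

lemma tendsto_mul_one_add_mul_sq_rpow_cocompact (hb : 0 < b) (hp : 3 / 2 < p) :
    Tendsto (fun x : ℝ => x * (1 + b * x ^ 2) ^ (1 - p)) (cocompact ℝ) (𝓝 0) := by
  have hbase : Tendsto (fun x : ℝ => 1 + b * x ^ 2) (cocompact ℝ) atTop := by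
    refine tendsto_atTop_add_const_left _ _ (Tendsto.const_mul_atTop hb ?_)
    refine ((tendsto_pow_atTop two_ne_zero).comp tendsto_norm_cocompact_atTop).congr fun x => ?_
    simp
  have hlim := ((tendsto_rpow_neg_atTop (by linarith : 0 < p - 3 / 2)).comp hbase).const_mul
    (√b)⁻¹
  rw [mul_zero] at hlim
  refine squeeze_zero_norm (fun x => ?_) hlim
  have hpos : 0 < 1 + b * x ^ 2 := by positivity
  have hx : √b * |x| ≤ (1 + b * x ^ 2) ^ (1 / 2 : ℝ) := by
    rw [← sqrt_sq_eq_abs, ← sqrt_mul hb.le, ← sqrt_eq_rpow]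
    exact sqrt_le_sqrt (by linarith)
  rw [norm_mul, norm_of_nonneg (rpow_nonneg hpos.le _), norm_eq_abs, Function.comp_apply,
    le_inv_mul_iff₀ (sqrt_pos.mpr hb), ← mul_assoc,
    show -(p - 3 / 2) = 1 / 2 + (1 - p) by ring, rpow_add hpos]
  exact mul_le_mul_of_nonneg_right hx (rpow_nonneg hpos.le _)

lemma hasDerivAt_mul_one_add_mul_sq_rpow (hb : 0 ≤ b) (p x : ℝ) :
    HasDerivAt (fun x : ℝ => x * (1 + b * x ^ 2) ^ (1 - p))
      ((1 + b * x ^ 2) ^ (-p) - (2 * p - 3) * b * (x ^ 2 * (1 + b * x ^ 2) ^ (-p))) x := by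
  have hpos : 0 < 1 + b * x ^ 2 := by positivity
  have h := (hasDerivAt_id' x).mul ((((hasDerivAt_pow 2 x).const_mul b).const_add 1).rpow_const
    (p := 1 - p) (Or.inl hpos.ne'))
  refine h.congr_deriv ?_
  rw [one_add_mul_sq_rpow_one_sub hb, sub_sub_cancel_left]
  simp only [Nat.cast_ofNat, one_mul]
  ring

lemma integral_one_add_mul_sq_rpow_neg_eq (hb : 0 < b) (hp : 3 / 2 < p) :
    ∫ x : ℝ, (1 + b * x ^ 2) ^ (-p) =
      (2 * p - 3) * b * ∫ x : ℝ, x ^ 2 * (1 + b * x ^ 2) ^ (-p) := by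
  have hI := integrable_one_add_mul_sq_rpow_neg hb (by linarith : 1 / 2 < p)
  have hJ := (integrable_sq_mul_one_add_mul_sq_rpow_neg hb hp).const_mul ((2 * p - 3) * b)
  have hlim := tendsto_mul_one_add_mul_sq_rpow_cocompact hb hp
  have h := integral_of_hasDerivAt_of_tendsto (hasDerivAt_mul_one_add_mul_sq_rpow hb.le p)
    (hI.sub hJ) (hlim.mono_left atBot_le_cocompact) (hlim.mono_left atTop_le_cocompact)
  rw [integral_sub hI hJ, integral_const_mul, sub_self, sub_eq_zero] at h
  exact h

lemma integral_one_add_mul_sq_rpow_neg_pos (hb : 0 < b) (hp : 1 / 2 < p) :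
    0 < ∫ x : ℝ, (1 + b * x ^ 2) ^ (-p) := by
  have hpos (x : ℝ) : 0 < (1 + b * x ^ 2) ^ (-p) := rpow_pos_of_pos (by positivity) _
  rw [integral_pos_iff_support_of_nonneg (fun x => (hpos x).le)
    (integrable_one_add_mul_sq_rpow_neg hb hp), Function.support_eq_univ fun x => (hpos x).ne']
  simp

lemma integral_sq_mul_div_integral_one_add_mul_sq_rpow_neg (hb : 0 < b) (hp : 3 / 2 < p) :
    (∫ x : ℝ, x ^ 2 * (1 + b * x ^ 2) ^ (-p)) / ∫ x : ℝ, (1 + b * x ^ 2) ^ (-p) =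
      ((2 * p - 3) * b)⁻¹ := by
  have hI := integral_one_add_mul_sq_rpow_neg_pos hb (by linarith : 1 / 2 < p)
  rw [integral_one_add_mul_sq_rpow_neg_eq hb hp] at hI ⊢
  rw [mul_comm, div_mul_cancel_left₀ (right_ne_zero_of_mul hI.ne')]

end OneAddMulSq

theorem stmt_5 (σ κ : ℝ) (hσ : 0 < σ) (hκ : 0 < κ)
    (f : ℝ → ℝ)
    (hf : ∀ x, f x = (Real.sqrt κ / (σ * betaFn (1 / (2 * κ)) (1 / 2))) *
        (1 + κ * x ^ 2 / σ ^ 2) ^ (-(1 + κ) / (2 * κ))) :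
    (∫ x : ℝ, x ^ 2 * f x ^ 3) / (∫ x : ℝ, f x ^ 3) = σ ^ 2 / 3 := by
  set c := √κ / (σ * betaFn (1 / (2 * κ)) (1 / 2))
  set b := κ / σ ^ 2 with hb_def
  set p := 3 * (1 + κ) / (2 * κ) with hp_def
  have hc : c ≠ 0 := (div_pos (sqrt_pos.mpr hκ)
    (mul_pos hσ (betaFn_pos (by positivity) one_half_pos))).ne'
  have hb : 0 < b := by positivity
  have hp : 3 / 2 < p := by rw [lt_div_iff₀ (by positivity)]; linarith
  have hf3 (x : ℝ) : f x ^ 3 = c ^ 3 * (1 + b * x ^ 2) ^ (-p) := by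
    rw [hf, mul_pow, ← rpow_mul_natCast (by positivity), hb_def, hp_def]
    congr 2 <;> push_cast <;> ring
  have hnum : ∫ x : ℝ, x ^ 2 * f x ^ 3 = c ^ 3 * ∫ x : ℝ, x ^ 2 * (1 + b * x ^ 2) ^ (-p) := by
    rw [← integral_const_mul]
    congr with x
    rw [hf3]
    ring
  simp_rw [hnum, hf3, integral_const_mul]
  rw [mul_div_mul_left _ _ (pow_ne_zero 3 hc),
    integral_sq_mul_div_integral_one_add_mul_sq_rpow_neg hb hp, hb_def, hp_def]
  field_simp
  ring
end

section
/- For the coupled Gaussian density f(x) = C(1 + κ x²/σ²)^{-(1+κ)/(2κ)} with σ, κ > 0, the zeros of the third derivative f⁽³⁾ on x ≠ 0 occur exactly at x = ±σ√3/√(1+2κ). -/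
/-!
Write `f = C g^p` with `g y = 1 + b y²`, `b = κ/σ²` and `p = -(1+κ)/(2κ)`. Three applications
of the chain and product rules give
`f''' x = 4 b² C p (p-1) x g(x)^(p-3) (3 + (2p-1) b x²)`.
Off `x = 0` every factor but the last is nonzero, and since `(2p-1) b = -(1+2κ)/σ²`
the last one vanishes exactly when `x² = 3σ²/(1+2κ)`.
-/

open Real

section OneAddMulSqRpow

variable {b : ℝ}

theorem one_add_mul_sq_pos (hb : 0 ≤ b) (x : ℝ) : 0 < 1 + b * x ^ 2 := by positivity

theorem hasDerivAt_one_add_mul_sq_rpow (hb : 0 ≤ b) (q x : ℝ) :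
    HasDerivAt (fun y => (1 + b * y ^ 2) ^ q) (2 * b * q * x * (1 + b * x ^ 2) ^ (q - 1)) x := by
  have hg : HasDerivAt (fun y => 1 + b * y ^ 2) (b * (2 * x)) x := by
    simpa using ((hasDerivAt_pow 2 x).const_mul b).const_add 1
  convert hg.rpow_const (Or.inl (one_add_mul_sq_pos hb x).ne') using 1
  ring

theorem deriv_const_mul_one_add_mul_sq_rpow (hb : 0 ≤ b) (C p : ℝ) :
    deriv (fun y => C * (1 + b * y ^ 2) ^ p)
      = fun y => 2 * b * C * p * (y * (1 + b * y ^ 2) ^ (p - 1)) := by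
  ext x
  convert ((hasDerivAt_one_add_mul_sq_rpow hb p x).const_mul C).deriv using 1
  ring

theorem deriv_mul_one_add_mul_sq_rpow (hb : 0 ≤ b) (q : ℝ) :
    deriv (fun y => y * (1 + b * y ^ 2) ^ q)
      = fun y => (1 + b * y ^ 2) ^ (q - 1) * (1 + (2 * q + 1) * b * y ^ 2) := by
  ext x
  have hg := one_add_mul_sq_pos hb x
  refine ((hasDerivAt_id' x).mul (hasDerivAt_one_add_mul_sq_rpow hb q x)).deriv.trans ?_
  rw [rpow_sub_one hg.ne']
  field_simp
  ring

theorem hasDerivAt_one_add_mul_sq_rpow_mul (hb : 0 ≤ b) (q c x : ℝ) :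
    HasDerivAt (fun y => (1 + b * y ^ 2) ^ q * (1 + c * b * y ^ 2))
      (2 * b * x * (1 + b * x ^ 2) ^ (q - 1) * (q + c + (q + 1) * c * b * x ^ 2)) x := by
  have hg := one_add_mul_sq_pos hb x
  have hpoly : HasDerivAt (fun y => 1 + c * b * y ^ 2) (c * b * (2 * x)) x := by
    simpa using ((hasDerivAt_pow 2 x).const_mul (c * b)).const_add 1
  refine ((hasDerivAt_one_add_mul_sq_rpow hb q x).mul hpoly).congr_deriv ?_
  rw [rpow_sub_one hg.ne']
  field_simp
  ring

theorem iteratedDeriv_three_const_mul_one_add_mul_sq_rpow (hb : 0 ≤ b) (C p x : ℝ) :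
    iteratedDeriv 3 (fun y => C * (1 + b * y ^ 2) ^ p) x
      = 4 * b ^ 2 * C * p * (p - 1) * x * (1 + b * x ^ 2) ^ (p - 3)
        * (3 + (2 * p - 1) * b * x ^ 2) := by
  rw [iteratedDeriv_eq_iterate]
  simp only [Function.iterate_succ, Function.iterate_zero, Function.comp_apply, id]
  rw [deriv_const_mul_one_add_mul_sq_rpow hb, deriv_const_mul_field',
    deriv_mul_one_add_mul_sq_rpow hb, deriv_const_mul_field']
  dsimp only
  rw [(hasDerivAt_one_add_mul_sq_rpow_mul hb _ _ x).deriv, show p - 1 - 1 - 1 = p - 3 by ring]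
  ring

theorem iteratedDeriv_three_const_mul_one_add_mul_sq_rpow_eq_zero_iff (hb : 0 < b) {C p x : ℝ}
    (hC : C ≠ 0) (hp₀ : p ≠ 0) (hp₁ : p ≠ 1) (hx : x ≠ 0) :
    iteratedDeriv 3 (fun y => C * (1 + b * y ^ 2) ^ p) x = 0 ↔ 3 + (2 * p - 1) * b * x ^ 2 = 0 := by
  have hg := one_add_mul_sq_pos hb.le x
  have hfactor : 4 * b ^ 2 * C * p * (p - 1) * x * (1 + b * x ^ 2) ^ (p - 3) ≠ 0 := by
    have := sub_ne_zero.2 hp₁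
    have := (rpow_pos_of_pos hg (p - 3)).ne'
    have := hb.ne'
    positivity
  rw [iteratedDeriv_three_const_mul_one_add_mul_sq_rpow hb.le, mul_eq_zero, or_iff_right hfactor]

end OneAddMulSqRpow

theorem stmt_13 (σ κ C : ℝ) (hσ : 0 < σ) (hκ : 0 < κ) (hC : 0 < C)
    (f : ℝ → ℝ)
    (hf : ∀ x, f x = C * (1 + κ * x ^ 2 / σ ^ 2) ^ (-(1 + κ) / (2 * κ))) :
    ∀ x : ℝ, x ≠ 0 → (iteratedDeriv 3 f x = 0 ↔
      (x = σ * Real.sqrt 3 / Real.sqrt (1 + 2 * κ) ∨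
        x = -(σ * Real.sqrt 3 / Real.sqrt (1 + 2 * κ)))) := by
  intro x hx
  have hκ' : 0 < 1 + 2 * κ := by linarith
  have hf' : f = fun y => C * (1 + κ / σ ^ 2 * y ^ 2) ^ (-(1 + κ) / (2 * κ)) :=
    funext fun y => by rw [hf, mul_div_right_comm]
  have hp : -(1 + κ) / (2 * κ) < 0 := div_neg_of_neg_of_pos (by linarith) (by positivity)
  have hinner : 3 + (2 * (-(1 + κ) / (2 * κ)) - 1) * (κ / σ ^ 2) * x ^ 2
      = (1 + 2 * κ) / σ ^ 2 * ((σ * √3 / √(1 + 2 * κ)) ^ 2 - x ^ 2) := by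
    rw [div_pow, mul_pow, sq_sqrt (by norm_num), sq_sqrt hκ'.le]
    field_simp
    ring
  rw [hf', iteratedDeriv_three_const_mul_one_add_mul_sq_rpow_eq_zero_iff (by positivity) hC.ne'
    hp.ne (by linarith) hx, hinner, mul_eq_zero, or_iff_right (by positivity), sub_eq_zero, eq_comm,
    sq_eq_sq_iff_eq_or_eq_neg]
end
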